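/- arXiv:1310.4987 — 2 statements merged into one kernel-verified Lean document; each statement's English description precedes it below -/
import Mathlib

section
/- Let K be a commutative ring, A a K-algebra, B a K-subalgebra such that B ⊗_K A ⊕ * ≅ A^n as B-A-bimodules, and let R = A^B be the centralizer of B in A. If B is finitely generated projective as a K-module, then A is an H-separable extension of R. -/
/-!  A noncommutative relative tensor product `L ⊗_C R` for a ring `C` mapping
into rings `L` (acting on the right through `f`) and `R` (acting on the left
through `g`), together with the outer left `L`-action `lact`, the outer right
`R`-action `ract`, a lifting principle for balanced biadditive maps, and the
multiplication map. -/

open scoped TensorProduct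

noncomputable section
namespace NCT

variable {C L R : Type*} [Ring C] [Ring L] [Ring R]

/-- The submodule of relations `(l * f c) ⊗ r - l ⊗ (g c * r)`. -/
def rel (f : C →+* L) (g : C →+* R) : Submodule ℤ (L ⊗[ℤ] R) :=
  Submodule.span ℤ
    {x | ∃ (l : L) (c : C) (r : R), x = (l * f c) ⊗ₜ[ℤ] r - l ⊗ₜ[ℤ] (g c * r)}

/-- The relative tensor product `L ⊗_C R`. -/
def Tens (f : C →+* L) (g : C →+* R) : Type _ := (L ⊗[ℤ] R) ⧸ rel f g

instance (f : C →+* L) (g : C →+* R) : AddCommGroup (Tens f g) :=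
  inferInstanceAs (AddCommGroup ((L ⊗[ℤ] R) ⧸ rel f g))

variable (f : C →+* L) (g : C →+* R)

/-- The canonical image of `l ⊗ r` in `L ⊗_C R`. -/
def tmul (l : L) (r : R) : Tens f g := Submodule.Quotient.mk (l ⊗ₜ[ℤ] r)

lemma tmul_rel (l : L) (c : C) (r : R) :
    tmul f g (l * f c) r = tmul f g l (g c * r) := by
  refine (Submodule.Quotient.eq _).2 ?_
  exact Submodule.subset_span ⟨l, c, r, rfl⟩

lemma tmul_add_left (l l' : L) (r : R) :
    tmul f g (l + l') r = tmul f g l r + tmul f g l' r := by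
  show Submodule.Quotient.mk _ = _
  rw [TensorProduct.add_tmul, Submodule.Quotient.mk_add]; rfl

lemma tmul_add_right (l : L) (r r' : R) :
    tmul f g l (r + r') = tmul f g l r + tmul f g l r' := by
  show Submodule.Quotient.mk _ = _
  rw [TensorProduct.tmul_add, Submodule.Quotient.mk_add]; rfl

/-- Package a biadditive map as a bundled `AddMonoidHom`-valued hom. -/
def mkBilin {M N P : Type*} [AddCommGroup M] [AddCommGroup N] [AddCommGroup P]
    (φ : M → N → P)
    (h1 : ∀ m m' n, φ (m + m') n = φ m n + φ m' n)
    (h2 : ∀ m n n', φ m (n + n') = φ m n + φ m n') : M →+ N →+ P :=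
  AddMonoidHom.mk' (fun m => AddMonoidHom.mk' (φ m) (h2 m))
    (fun m m' => by ext n; exact h1 m m' n)

@[simp] lemma mkBilin_apply {M N P : Type*} [AddCommGroup M] [AddCommGroup N] [AddCommGroup P]
    (φ : M → N → P) (h1 h2) (m : M) (n : N) : mkBilin φ h1 h2 m n = φ m n := rfl

/-- Lift a balanced biadditive map to the relative tensor product. -/
def lift {P : Type*} [AddCommGroup P] (φ : L →+ R →+ P)
    (hbal : ∀ l c r, φ (l * f c) r = φ l (g c * r)) : Tens f g →+ P :=
  (Submodule.liftQ (rel f g)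
    (TensorProduct.liftAddHom φ (by
      intro n l r
      simp only [AddMonoidHom.map_zsmul, AddMonoidHom.smul_apply]) ).toIntLinearMap
    (by
      rw [rel, Submodule.span_le]
      rintro x ⟨l, c, r, rfl⟩
      simp only [SetLike.mem_coe, LinearMap.mem_ker, AddMonoidHom.coe_toIntLinearMap,
        map_sub, TensorProduct.liftAddHom_tmul]
      rw [hbal, sub_self])).toAddMonoidHom

@[simp] lemma lift_tmul {P : Type*} [AddCommGroup P] (φ : L →+ R →+ P)
    (hbal : ∀ l c r, φ (l * f c) r = φ l (g c * r)) (l : L) (r : R) :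
    lift f g φ hbal (tmul f g l r) = φ l r := rfl

/-- The outer left action of `L` on `L ⊗_C R`. -/
def lact (l : L) : Tens f g →+ Tens f g :=
  lift f g (mkBilin (fun l' r => tmul f g (l * l') r)
      (fun a b r => by rw [mul_add, tmul_add_left])
      (fun a r s => by rw [tmul_add_right]))
    (fun l' c r => by simp only [mkBilin_apply]; rw [← mul_assoc, tmul_rel])

@[simp] lemma lact_tmul (l l' : L) (r : R) :
    lact f g l (tmul f g l' r) = tmul f g (l * l') r := rfl

/-- The outer right action of `R` on `L ⊗_C R`. -/
def ract (r : R) : Tens f g →+ Tens f g :=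
  lift f g (mkBilin (fun l' r' => tmul f g l' (r' * r))
      (fun a b r' => by rw [tmul_add_left])
      (fun a r' s => by rw [add_mul, tmul_add_right]))
    (fun l' c r' => by simp only [mkBilin_apply]; rw [tmul_rel, mul_assoc])

@[simp] lemma ract_tmul (r r' : R) (l : L) :
    ract f g r (tmul f g l r') = tmul f g l (r' * r) := rfl

/-- The map induced on relative tensor products by a ring map on the left factor. -/
def mapLeft {L' : Type*} [Ring L'] (h : L →+* L') :
    Tens f g →+ Tens (h.comp f) g :=
  lift f g (mkBilin (fun l r => tmul (h.comp f) g (h l) r)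
      (fun a b r => by rw [map_add, tmul_add_left])
      (fun a r s => by rw [tmul_add_right]))
    (fun l c r => by
      simp only [mkBilin_apply, map_mul]
      exact tmul_rel (h.comp f) g (h l) c r)

@[simp] lemma mapLeft_tmul {L' : Type*} [Ring L'] (h : L →+* L') (l : L) (r : R) :
    mapLeft f g h (tmul f g l r) = tmul (h.comp f) g (h l) r := rfl

/-- The multiplication map `L ⊗_C R → R`, `l ⊗ r ↦ jl l * r`, for a ring map
`jl : L → R` compatible with the two maps from `C`. -/
def mulMap (jl : L →+* R) (hcomp : ∀ c, jl (f c) = g c) : Tens f g →+ R :=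
  lift f g (mkBilin (fun l r => jl l * r)
      (fun a b r => by rw [map_add, add_mul])
      (fun a r s => by rw [mul_add]))
    (fun l c r => by simp only [mkBilin_apply]; rw [map_mul, hcomp, mul_assoc])

@[simp] lemma mulMap_tmul (jl : L →+* R) (hcomp : ∀ c, jl (f c) = g c) (l : L) (r : R) :
    mulMap f g jl hcomp (tmul f g l r) = jl l * r := rfl

/-- Induction principle: every element of `L ⊗_C R` is built from `tmul`s. -/
lemma tens_induction {p : Tens f g → Prop} (zero : p 0)
    (tm : ∀ l r, p (tmul f g l r)) (add : ∀ x y, p x → p y → p (x + y)) :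
    ∀ x, p x := by
  intro x
  obtain ⟨y, rfl⟩ := Submodule.Quotient.mk_surjective _ x
  induction y using TensorProduct.induction_on with
  | zero => exact zero
  | tmul l r => exact tm l r
  | add a b ha hb =>
      rw [Submodule.Quotient.mk_add]
      exact add _ _ ha hb

end NCT
end

noncomputable section
open NCT

/-- The tower `A ⊇ B ⊇ C` (given by injective ring maps `ι : C → B`, `j : B → A`) is
*left relative H-separable*: `B ⊗_C A ⊕ * ≅ A^n` as `B`-`A`-bimodules. -/
def LeftRelHSep {C B A : Type*} [Ring C] [Ring B] [Ring A]
    (ι : C →+* B) (j : B →+* A) (n : ℕ) : Prop :=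
  ∃ (i : Tens ι (j.comp ι) →+ (Fin n → A)) (p : (Fin n → A) →+ Tens ι (j.comp ι)),
    (∀ (b : B) x, i (lact ι (j.comp ι) b x) = fun k => j b * i x k) ∧
    (∀ (a : A) x, i (ract ι (j.comp ι) a x) = fun k => i x k * a) ∧
    (∀ (b : B) v, p (fun k => j b * v k) = lact ι (j.comp ι) b (p v)) ∧
    (∀ (a : A) v, p (fun k => v k * a) = ract ι (j.comp ι) a (p v)) ∧
    ∀ x, p (i x) = x

/-- `B` is a *left relative separable extension of `C` in `A`*: the multiplication map
`μ : B ⊗_C A → A` splits as a `B`-`A`-bimodule epimorphism. -/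
def LeftRelSep {C B A : Type*} [Ring C] [Ring B] [Ring A]
    (ι : C →+* B) (j : B →+* A) : Prop :=
  ∃ σ : A →+ Tens ι (j.comp ι),
    (∀ (b : B) (a : A), σ (j b * a) = lact ι (j.comp ι) b (σ a)) ∧
    (∀ (a a' : A), σ (a * a') = ract ι (j.comp ι) a' (σ a)) ∧
    ∀ a, mulMap ι (j.comp ι) j (fun _ => rfl) (σ a) = a

/-- `B ⊇ C` is a separable extension: there is a `B`-central element
`e ∈ B ⊗_C B` with `μ(e) = 1`. -/
def IsSepExt {C B : Type*} [Ring C] [Ring B] (ι : C →+* B) : Prop :=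
  ∃ e : Tens ι ι, (∀ b : B, lact ι ι b e = ract ι ι b e) ∧
    mulMap ι ι (RingHom.id B) (fun _ => rfl) e = 1

/-! Let `R` be the centralizer of `B`. A splitting `i, p` of `B ⊗_K A` off `A^n` yields elements
`e_k = p(δ_k)` (`gen`) of `B ⊗_K A` commuting with `B`, and `u = i(1 ⊗ 1)` (`coordOne`), with
`x = ∑ₖ e_k · i(x)_k` for every `x`. For `K`-linear `φ : B → A` put
`Q φ = ∑ₖ φ̃(e_k) ⊗ u_k ∈ A ⊗_R A` (`tensOfHom`), where `φ̃(b ⊗ a) = φ(b) a` (`contract`).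
Then `Q` is an `A`-bimodule map (for the right action, expand `b ⊗ c ↦ b ⊗ ac` applied to `e_l`
along the `e_k`: the coefficients commute with `B`, so they lie in `R` and pass through `⊗_R`),
and `Q` sends the inclusion `B → A` to `1 ⊗ 1`, because the multiplication map sends each `e_k`
into `R`. A dual basis `(b_t, g_t)` of the projective `K`-module `B` then exhibits `A ⊗_R A` as
a direct summand of `A^s`, via `a ⊗ a' ↦ (a b_t a')_t` and `v ↦ Q (b ↦ ∑ₜ g_t(b) v_t)`. -/

namespace NCT

variable {C L R : Type*} [Ring C] [Ring L] [Ring R] (f : C →+* L) (g : C →+* R)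

lemma tmul_sum_left {ι : Type*} (s : Finset ι) (l : ι → L) (r : R) :
    tmul f g (∑ i ∈ s, l i) r = ∑ i ∈ s, tmul f g (l i) r :=
  map_sum (AddMonoidHom.mk' (tmul f g · r) (tmul_add_left f g · · r)) l s

lemma tmul_sum_right {ι : Type*} (s : Finset ι) (l : L) (r : ι → R) :
    tmul f g l (∑ i ∈ s, r i) = ∑ i ∈ s, tmul f g l (r i) :=
  map_sum (AddMonoidHom.mk' (tmul f g l ·) (tmul_add_right f g l)) r s

lemma sum_tmul_sum_mul {ι κ : Type*} [Fintype ι] [Fintype κ] (x : ι → L) (w : ι → κ → C)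
    (y : κ → R) :
    ∑ l, tmul f g (∑ k, x k * f (w k l)) (y l) = ∑ k, tmul f g (x k) (∑ l, g (w k l) * y l) := by
  simp only [tmul_sum_left, tmul_sum_right, tmul_rel]
  exact Finset.sum_comm

end NCT

section Sandwich

variable {A : Type*} [Ring A] (S : Subring A)

def sandwich {s : ℕ} (c : Fin s → A) (hc : ∀ t, c t ∈ Subring.centralizer (S : Set A)) :
    Tens S.subtype S.subtype →+ (Fin s → A) :=
  lift _ _ (mkBilin (fun a a' t => a * c t * a')
      (fun x y a' => by funext t; simp only [Pi.add_apply, add_mul])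
      (fun x a' a'' => by funext t; simp only [Pi.add_apply, mul_add]))
    (fun l r a' => by
      funext t
      have hr : (r : A) * c t = c t * r := Subring.mem_centralizer_iff.mp (hc t) r r.2
      simp only [mkBilin_apply, Subring.coe_subtype]
      rw [mul_assoc l, hr, ← mul_assoc, mul_assoc _ (r : A)])

variable {S}

@[simp] lemma sandwich_tmul {s : ℕ} (c : Fin s → A) (hc) (a a' : A) :
    sandwich S c hc (tmul _ _ a a') = fun t => a * c t * a' := rfl

lemma sandwich_lact {s : ℕ} (c : Fin s → A) (hc) (a : A) (x : Tens S.subtype S.subtype) :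
    sandwich S c hc (lact _ _ a x) = fun t => a * sandwich S c hc x t := by
  induction x using tens_induction with
  | zero => funext t; simp
  | tm l r => funext t; simp [mul_assoc]
  | add x y hx hy => funext t; simp only [map_add, Pi.add_apply, hx, hy, mul_add]

lemma sandwich_ract {s : ℕ} (c : Fin s → A) (hc) (a : A) (x : Tens S.subtype S.subtype) :
    sandwich S c hc (ract _ _ a x) = fun t => sandwich S c hc x t * a := by
  induction x using tens_induction with
  | zero => funext t; simp
  | tm l r => funext t; simp [mul_assoc]
  | add x y hx hy => funext t; simp only [map_add, Pi.add_apply, hx, hy, add_mul]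

end Sandwich

section Contract

variable {K A : Type*} [CommRing K] [Ring A] [Algebra K A] {B : Subalgebra K A}

def contract (φ : B →ₗ[K] A) : Tens (algebraMap K B) (algebraMap K A) →+ A :=
  lift _ _ (mkBilin (fun b a => φ b * a)
      (fun x y a => by rw [map_add, add_mul])
      (fun x a a' => by rw [mul_add]))
    (fun b k a => by
      simp only [mkBilin_apply]
      rw [← Algebra.commutes, ← Algebra.smul_def, map_smul, ← Algebra.smul_def, smul_mul_assoc,
        mul_smul_comm])

@[simp] lemma contract_tmul (φ : B →ₗ[K] A) (b : B) (a : A) :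
    contract φ (tmul _ _ b a) = φ b * a := rfl

lemma contract_add (φ ψ : B →ₗ[K] A) (x : Tens (algebraMap K B) (algebraMap K A)) :
    contract (φ + ψ) x = contract φ x + contract ψ x := by
  induction x using tens_induction with
  | zero => simp
  | tm b a => simp [add_mul]
  | add x y hx hy => rw [map_add, map_add, map_add, hx, hy, add_add_add_comm]

lemma contract_mulLeft (a : A) (φ : B →ₗ[K] A) (x : Tens (algebraMap K B) (algebraMap K A)) :
    contract (LinearMap.mulLeft K a ∘ₗ φ) x = a * contract φ x := by
  induction x using tens_induction with
  | zero => simp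
  | tm b a' => simp [mul_assoc]
  | add x y hx hy => simp only [map_add, hx, hy, mul_add]

lemma contract_ract (φ : B →ₗ[K] A) (a : A) (x : Tens (algebraMap K B) (algebraMap K A)) :
    contract φ (ract _ _ a x) = contract φ x * a := by
  induction x using tens_induction with
  | zero => simp
  | tm b a' => simp [mul_assoc]
  | add x y hx hy => simp only [map_add, hx, hy, add_mul]

lemma contract_val_lact (b : B) (x : Tens (algebraMap K B) (algebraMap K A)) :
    contract B.val.toLinearMap (lact _ _ b x) = b * contract B.val.toLinearMap x := by
  induction x using tens_induction with
  | zero => simp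
  | tm b' a => simp [mul_assoc]
  | add x y hx hy => simp only [map_add, hx, hy, mul_add]

def mulMiddle (a : A) :
    Tens (algebraMap K B) (algebraMap K A) →+ Tens (algebraMap K B) (algebraMap K A) :=
  lift _ _ (mkBilin (fun b c => tmul _ _ b (a * c))
      (fun x y c => by rw [tmul_add_left])
      (fun x c c' => by rw [mul_add, tmul_add_right]))
    (fun b k c => by
      simp only [mkBilin_apply]
      rw [tmul_rel, ← mul_assoc, Algebra.commutes k a, mul_assoc])

@[simp] lemma mulMiddle_tmul (a : A) (b : B) (c : A) :
    mulMiddle a (tmul _ _ b c) = tmul _ _ b (a * c) := rfl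

lemma mulMiddle_lact (a : A) (b : B) (x : Tens (algebraMap K B) (algebraMap K A)) :
    mulMiddle a (lact _ _ b x) = lact _ _ b (mulMiddle a x) := by
  induction x using tens_induction with
  | zero => simp
  | tm b' c => simp
  | add x y hx hy => simp only [map_add, hx, hy]

lemma mulMiddle_ract (a c : A) (x : Tens (algebraMap K B) (algebraMap K A)) :
    mulMiddle a (ract _ _ c x) = ract _ _ c (mulMiddle a x) := by
  induction x using tens_induction with
  | zero => simp
  | tm b c' => simp [mul_assoc]
  | add x y hx hy => simp only [map_add, hx, hy]

lemma contract_mulRight (a : A) (φ : B →ₗ[K] A) (x : Tens (algebraMap K B) (algebraMap K A)) :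
    contract (LinearMap.mulRight K a ∘ₗ φ) x = contract φ (mulMiddle a x) := by
  induction x using tens_induction with
  | zero => simp
  | tm b c => simp [mul_assoc]
  | add x y hx hy => simp only [map_add, hx, hy]

def IsBCentral (x : Tens (algebraMap K B) (algebraMap K A)) : Prop :=
  ∀ b : B, lact _ _ b x = ract _ _ (b : A) x

lemma IsBCentral.mulMiddle {x : Tens (algebraMap K B) (algebraMap K A)} (hx : IsBCentral x)
    (a : A) : IsBCentral (mulMiddle a x) := fun b => by rw [← mulMiddle_lact, hx, mulMiddle_ract]

lemma IsBCentral.contract_val_mem_centralizer {x : Tens (algebraMap K B) (algebraMap K A)}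
    (hx : IsBCentral x) : contract B.val.toLinearMap x ∈ Subring.centralizer (B : Set A) :=
  Subring.mem_centralizer_iff.mpr fun b hb => by
    rw [← contract_val_lact ⟨b, hb⟩, hx, contract_ract]

end Contract

section Splitting

variable {K A : Type*} [CommRing K] [Ring A] [Algebra K A]

lemma Subalgebra.coe_mem_centralizer_centralizer {B : Subalgebra K A} (b : B) :
    (b : A) ∈ Subring.centralizer (Subring.centralizer (B : Set A) : Set A) :=
  Subring.closure_le_centralizer_centralizer _ (Subring.subset_closure b.2)

structure BimodSplitting (B : Subalgebra K A) (n : ℕ) where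
  i : Tens (algebraMap K B) (algebraMap K A) →+ (Fin n → A)
  p : (Fin n → A) →+ Tens (algebraMap K B) (algebraMap K A)
  i_lact : ∀ (b : B) x, i (lact _ _ b x) = fun k => (b : A) * i x k
  i_ract : ∀ (a : A) x, i (ract _ _ a x) = fun k => i x k * a
  p_lact : ∀ (b : B) v, p (fun k => (b : A) * v k) = lact _ _ b (p v)
  p_ract : ∀ (a : A) v, p (fun k => v k * a) = ract _ _ a (p v)
  p_i : ∀ x, p (i x) = x

namespace BimodSplitting

variable {B : Subalgebra K A} {n : ℕ} (S : BimodSplitting B n)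

local notation "Rᴮ" => Subring.centralizer (B : Set A)

def gen (k : Fin n) : Tens (algebraMap K B) (algebraMap K A) := S.p (Pi.single k 1)

def coordOne : Fin n → A := S.i (tmul _ _ 1 1)

lemma p_single (k : Fin n) (c : A) : S.p (Pi.single k c) = ract _ _ c (S.gen k) := by
  rw [gen, ← S.p_ract]
  congr 1
  funext k'
  by_cases h : k' = k <;> simp [h]

lemma eq_sum_ract_gen (x : Tens (algebraMap K B) (algebraMap K A)) :
    x = ∑ k, ract _ _ (S.i x k) (S.gen k) := by
  conv_lhs => rw [← S.p_i x, ← Finset.univ_sum_single (S.i x), map_sum]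
  simp only [p_single]

lemma gen_isBCentral (k : Fin n) : IsBCentral (S.gen k) := fun b => by
  rw [gen, ← S.p_lact, ← S.p_ract]
  congr 1
  funext k'
  by_cases h : k' = k <;> simp [h]

lemma i_mem_centralizer {x : Tens (algebraMap K B) (algebraMap K A)} (hx : IsBCentral x)
    (k : Fin n) : S.i x k ∈ Rᴮ :=
  Subring.mem_centralizer_iff.mpr fun b hb => by
    have h := congrFun (S.i_lact ⟨b, hb⟩ x) k
    rw [hx, S.i_ract] at h
    exact h.symm

lemma sum_ract_coordOne_gen : ∑ k, ract _ _ (S.coordOne k) (S.gen k) = tmul _ _ 1 1 :=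
  (S.eq_sum_ract_gen _).symm

lemma sum_contract_val_gen_mul_coordOne :
    ∑ k, contract B.val.toLinearMap (S.gen k) * S.coordOne k = 1 := by
  simp only [← contract_ract, ← map_sum, sum_ract_coordOne_gen, contract_tmul]
  simp

lemma sum_i_mulMiddle_gen_mul_coordOne (a : A) (k : Fin n) :
    ∑ l, S.i (mulMiddle a (S.gen l)) k * S.coordOne l = S.coordOne k * a := by
  calc ∑ l, S.i (mulMiddle a (S.gen l)) k * S.coordOne l
      = S.i (mulMiddle a (∑ l, ract _ _ (S.coordOne l) (S.gen l))) k := by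
        simp only [map_sum, mulMiddle_ract, S.i_ract, Finset.sum_apply]
    _ = S.i (ract _ _ a (tmul _ _ 1 1)) k := by
        rw [sum_ract_coordOne_gen, mulMiddle_tmul, ract_tmul, mul_one, one_mul]
    _ = S.coordOne k * a := congrFun (S.i_ract a _) k

def tensOfHom (φ : B →ₗ[K] A) : Tens Rᴮ.subtype Rᴮ.subtype :=
  ∑ k, tmul _ _ (contract φ (S.gen k)) (S.coordOne k)

lemma tensOfHom_add (φ ψ : B →ₗ[K] A) :
    S.tensOfHom (φ + ψ) = S.tensOfHom φ + S.tensOfHom ψ := by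
  simp only [tensOfHom, contract_add, tmul_add_left, Finset.sum_add_distrib]

lemma tensOfHom_mulLeft (a : A) (φ : B →ₗ[K] A) :
    S.tensOfHom (LinearMap.mulLeft K a ∘ₗ φ) = lact _ _ a (S.tensOfHom φ) := by
  simp only [tensOfHom, contract_mulLeft, map_sum, lact_tmul]

lemma tensOfHom_mulRight (a : A) (φ : B →ₗ[K] A) :
    S.tensOfHom (LinearMap.mulRight K a ∘ₗ φ) = ract _ _ a (S.tensOfHom φ) := by
  let w : Fin n → Fin n → Rᴮ := fun k l =>
    ⟨S.i (mulMiddle a (S.gen l)) k, S.i_mem_centralizer ((S.gen_isBCentral l).mulMiddle a) k⟩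
  calc S.tensOfHom (LinearMap.mulRight K a ∘ₗ φ)
      = ∑ l, tmul _ _ (∑ k, contract φ (S.gen k) * Rᴮ.subtype (w k l)) (S.coordOne l) := by
        refine Finset.sum_congr rfl fun l _ => ?_
        rw [contract_mulRight, S.eq_sum_ract_gen (mulMiddle a (S.gen l)), map_sum]
        simp only [contract_ract, w, Subring.coe_subtype]
    _ = ∑ k, tmul _ _ (contract φ (S.gen k)) (∑ l, Rᴮ.subtype (w k l) * S.coordOne l) :=
        sum_tmul_sum_mul _ _ _ _ _
    _ = ract _ _ a (S.tensOfHom φ) := by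
        simp only [w, Subring.coe_subtype, sum_i_mulMiddle_gen_mul_coordOne, tensOfHom, map_sum,
          ract_tmul]

lemma tensOfHom_val : S.tensOfHom B.val.toLinearMap = tmul _ _ 1 1 := by
  calc S.tensOfHom B.val.toLinearMap
      = ∑ k, tmul _ _ 1 (contract B.val.toLinearMap (S.gen k) * S.coordOne k) := by
        refine Finset.sum_congr rfl fun k _ => ?_
        have hc := ((S.gen_isBCentral k).contract_val_mem_centralizer)
        simpa using tmul_rel Rᴮ.subtype Rᴮ.subtype 1 ⟨_, hc⟩ (S.coordOne k)
    _ = tmul _ _ 1 1 := by rw [← tmul_sum_right, sum_contract_val_gen_mul_coordOne]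

variable {s : ℕ} (g : B →ₗ[K] (Fin s → K))

def retraction : (Fin s → A) →+ Tens Rᴮ.subtype Rᴮ.subtype :=
  AddMonoidHom.mk' (fun v => S.tensOfHom (Fintype.linearCombination K v ∘ₗ g)) fun v w => by
    rw [← tensOfHom_add]
    congr 1
    ext b
    simp [Fintype.linearCombination_apply, Finset.sum_add_distrib]

lemma retraction_apply (v : Fin s → A) :
    S.retraction g v = S.tensOfHom (Fintype.linearCombination K v ∘ₗ g) := rfl

lemma retraction_lact (a : A) (v : Fin s → A) :
    S.retraction g (fun t => a * v t) = lact _ _ a (S.retraction g v) := by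
  rw [retraction_apply, retraction_apply, ← tensOfHom_mulLeft]
  congr 1
  ext b
  simp [Fintype.linearCombination_apply]

lemma retraction_ract (a : A) (v : Fin s → A) :
    S.retraction g (fun t => v t * a) = ract _ _ a (S.retraction g v) := by
  rw [retraction_apply, retraction_apply, ← tensOfHom_mulRight]
  congr 1
  ext b
  simp [Fintype.linearCombination_apply]

lemma retraction_image_single {f : (Fin s → K) →ₗ[K] B} (hfg : f ∘ₗ g = LinearMap.id) :
    S.retraction g (fun t => (f (Pi.single t 1) : A)) = tmul _ _ 1 1 := by
  rw [retraction_apply, ← tensOfHom_val]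
  congr 1
  ext b
  have hb : f (g b) = b := LinearMap.congr_fun hfg b
  conv_rhs => rw [← hb, ← Finset.univ_sum_single (g b)]
  simp only [LinearMap.comp_apply, Fintype.linearCombination_apply, map_sum,
    Subalgebra.coe_val, AlgHom.toLinearMap_apply]
  refine Finset.sum_congr rfl fun t _ => ?_
  rw [← Subalgebra.coe_smul, ← map_smul, ← Pi.single_smul', smul_eq_mul, mul_one]

lemma retraction_sandwich {f : (Fin s → K) →ₗ[K] B} (hfg : f ∘ₗ g = LinearMap.id)
    (x : Tens Rᴮ.subtype Rᴮ.subtype) :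
    S.retraction g (sandwich Rᴮ (fun t => (f (Pi.single t 1) : A))
      (fun _ => Subalgebra.coe_mem_centralizer_centralizer _) x) = x := by
  induction x using tens_induction with
  | zero => simp only [map_zero]
  | tm a a' =>
      simp only [sandwich_tmul, mul_assoc]
      rw [S.retraction_lact, S.retraction_ract g a' (fun t => (f (Pi.single t 1) : A)),
        S.retraction_image_single g hfg, ract_tmul, lact_tmul, one_mul, mul_one]
  | add x y hx hy => rw [map_add, map_add, hx, hy]

end BimodSplitting

end Splitting

/-- if `B` is a `K`-subalgebra of a `K`-algebra `A` with
`B ⊗_K A ⊕ * ≅ A^n` as `B`-`A`-bimodules and `B` is finitely generated projective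
over `K`, then `A` is an H-separable extension of the centralizer `R = A^B`. -/
theorem hSeparable_over_centralizer
    {K A : Type*} [CommRing K] [Ring A] [Algebra K A] (B : Subalgebra K A)
    [Module.Finite K ↥B] [Module.Projective K ↥B]
    (hgen : ∃ (n : ℕ)
        (i : Tens (algebraMap K ↥B) (algebraMap K A) →+ (Fin n → A))
        (p : (Fin n → A) →+ Tens (algebraMap K ↥B) (algebraMap K A)),
      (∀ (b : ↥B) x, i (lact (algebraMap K ↥B) (algebraMap K A) b x) = fun k => (b : A) * i x k) ∧
      (∀ (a : A) x, i (ract (algebraMap K ↥B) (algebraMap K A) a x) = fun k => i x k * a) ∧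
      (∀ (b : ↥B) v, p (fun k => (b : A) * v k) = lact (algebraMap K ↥B) (algebraMap K A) b (p v)) ∧
      (∀ (a : A) v, p (fun k => v k * a) = ract (algebraMap K ↥B) (algebraMap K A) a (p v)) ∧
      ∀ x, p (i x) = x) :
    ∃ (m : ℕ)
      (i : Tens (Subring.centralizer (B : Set A)).subtype
        (Subring.centralizer (B : Set A)).subtype →+ (Fin m → A))
      (p : (Fin m → A) →+ Tens (Subring.centralizer (B : Set A)).subtype
        (Subring.centralizer (B : Set A)).subtype),
      (∀ (a : A) x, i (lact (Subring.centralizer (B : Set A)).subtype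
        (Subring.centralizer (B : Set A)).subtype a x) = fun k => a * i x k) ∧
      (∀ (a : A) x, i (ract (Subring.centralizer (B : Set A)).subtype
        (Subring.centralizer (B : Set A)).subtype a x) = fun k => i x k * a) ∧
      (∀ (a : A) v, p (fun k => a * v k) = lact (Subring.centralizer (B : Set A)).subtype
        (Subring.centralizer (B : Set A)).subtype a (p v)) ∧
      (∀ (a : A) v, p (fun k => v k * a) = ract (Subring.centralizer (B : Set A)).subtype
        (Subring.centralizer (B : Set A)).subtype a (p v)) ∧
      ∀ x, p (i x) = x := by
  obtain ⟨n, i, p, hi_l, hi_r, hp_l, hp_r, hpi⟩ := hgen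
  let S : BimodSplitting B n := ⟨i, p, hi_l, hi_r, hp_l, hp_r, hpi⟩
  obtain ⟨s, f, g, -, -, hfg⟩ := Module.Finite.exists_comp_eq_id_of_projective K B
  exact ⟨s, sandwich _ _ _, S.retraction g, sandwich_lact _ _, sandwich_ract _ _,
    S.retraction_lact g, S.retraction_ract g, S.retraction_sandwich g hfg⟩
end
end

section
/- Let B ⊇ C be a ring extension such that B_C is a progenerator (finitely generated projective generator) as a right C-module. Set A = End(B_C) with B embedded in A via the left regular representation b ↦ λ_b. Then B ⊇ C is right normal (right depth 2: B ⊗_C B ⊕ * ≅ B^m as B-C-bimodules) if and only if the tower A ⊇ B ⊇ C is left relative H-separable (B ⊗_C A ⊕ * ≅ A^n as B-A-bimodules). -/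
/-!  A noncommutative relative tensor product `L ⊗_C R` for a ring `C` mapping
into rings `L` (acting on the right through `f`) and `R` (acting on the left
through `g`), together with the outer left `L`-action `lact`, the outer right
`R`-action `ract`, a lifting principle for balanced biadditive maps, and the
multiplication map. -/

open scoped TensorProduct

noncomputable section
open NCT

/-- `B` as a right `C`-module, via `ι`. -/
def rmod {C B : Type*} [Ring C] [Ring B] (ι : C →+* B) : Module Cᵐᵒᵖ B :=
  Module.compHom B (RingHom.op ι)

/-- `End(B_C)`: the ring of right `C`-linear endomorphisms of `B`. -/
def EndC {C B : Type*} [Ring C] [Ring B] (ι : C →+* B) : Type _ :=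
  letI := rmod ι
  B →ₗ[Cᵐᵒᵖ] B

noncomputable instance {C B : Type*} [Ring C] [Ring B] (ι : C →+* B) : Ring (EndC ι) :=
  letI := rmod ι
  (inferInstance : Ring (Module.End Cᵐᵒᵖ B))

/-- The left regular representation `λ : B → End(B_C)`, `b ↦ (x ↦ b * x)`. -/
def lam {C B : Type*} [Ring C] [Ring B] (ι : C →+* B) : B →+* EndC ι :=
  letI := rmod ι
  { toFun := fun b =>
      { toFun := fun x => b * x
        map_add' := fun x y => mul_add b x y
        map_smul' := fun c x => (mul_assoc b x (ι c.unop)).symm }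
    map_one' := by apply LinearMap.ext; intro x; exact one_mul x
    map_mul' := fun b b' => by apply LinearMap.ext; intro x; exact mul_assoc b b' x
    map_zero' := by apply LinearMap.ext; intro x; exact zero_mul x
    map_add' := fun b b' => by apply LinearMap.ext; intro x; exact add_mul b b' x }

/-! Since `B_C` is finitely generated projective with a dual basis `(xₖ, φₖ)`, the map
`b ⊗ a ↦ (t ↦ b ⊗ a t)` is an isomorphism of `B`-`A`-bimodules `B ⊗_C A ≅ Hom(B_C, B ⊗_C B)`,
with inverse `F ↦ ∑ₖ F(xₖ) · (ι ∘ φₖ)`. As `Hom(B_C, B^m) = A^m`, applying `Hom(B_C, -)` to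
`B ⊗_C B ⊕ * ≅ B^m` gives `B ⊗_C A ⊕ * ≅ A^m`. Conversely, `- ⊗_A B` turns `B ⊗_C A ⊕ * ≅ A^n`
back into `B ⊗_C B ⊕ * ≅ B^n`: concretely, `b ⊗ a ↦ b ⊗ a 1` retracts `b ⊗ b' ↦ b ⊗ λ_{b'}`,
and `A^n → B^n` is evaluation at `1`. -/

namespace NCT

variable {C L R : Type*} [Ring C] [Ring L] [Ring R] (f : C →+* L) (g : C →+* R)

lemma eq_of_forall_tmul {P : Type*} [AddCommGroup P] {φ ψ : Tens f g →+ P}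
    (h : ∀ l r, φ (tmul f g l r) = ψ (tmul f g l r)) (z : Tens f g) : φ z = ψ z := by
  induction z using tens_induction with
  | zero => simp only [map_zero]
  | tm l r => exact h l r
  | add x y hx hy => simp only [map_add, hx, hy]

lemma ract_ract (r r' : R) (z : Tens f g) :
    ract f g r' (ract f g r z) = ract f g (r * r') z :=
  eq_of_forall_tmul f g (φ := (ract f g r').comp (ract f g r)) (ψ := ract f g (r * r'))
    (fun l s => by simp [mul_assoc]) z

lemma ract_lact (r : R) (l : L) (z : Tens f g) :
    ract f g r (lact f g l z) = lact f g l (ract f g r z) :=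
  eq_of_forall_tmul f g (φ := (ract f g r).comp (lact f g l))
    (ψ := (lact f g l).comp (ract f g r)) (fun _ _ => rfl) z

def ractHom (z : Tens f g) : R →+ Tens f g :=
  AddMonoidHom.mk' (fun r => ract f g r z) fun r r' =>
    eq_of_forall_tmul f g (φ := ract f g (r + r')) (ψ := ract f g r + ract f g r')
      (fun l s => by simp [mul_add, tmul_add_right]) z

lemma ract_sum {κ : Type*} (s : Finset κ) (r : κ → R) (z : Tens f g) :
    ract f g (∑ k ∈ s, r k) z = ∑ k ∈ s, ract f g (r k) z :=
  map_sum (ractHom f g z) r s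

lemma tmul_sum {κ : Type*} (s : Finset κ) (l : L) (r : κ → R) :
    tmul f g l (∑ k ∈ s, r k) = ∑ k ∈ s, tmul f g l (r k) :=
  map_sum (AddMonoidHom.mk' (tmul f g l) (tmul_add_right f g l)) r s

end NCT

namespace EndC

variable {C B : Type*} [Ring C] [Ring B] {ι : C →+* B}

instance : FunLike (EndC ι) B B :=
  @LinearMap.instFunLike _ _ _ _ _ _ _ _ (rmod ι) (rmod ι) _

instance : AddMonoidHomClass (EndC ι) B B where
  map_add a := @LinearMap.map_add _ _ _ _ _ _ _ _ (rmod ι) (rmod ι) _ a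
  map_zero a := @LinearMap.map_zero _ _ _ _ _ _ _ _ (rmod ι) (rmod ι) _ a

@[ext] lemma ext {a a' : EndC ι} (h : ∀ x, a x = a' x) : a = a' :=
  letI := rmod ι
  LinearMap.ext (M := B) (R := Cᵐᵒᵖ) h

lemma map_mul_ι (a : EndC ι) (x : B) (c : C) : a (x * ι c) = a x * ι c :=
  letI := rmod ι
  LinearMap.map_smul (M := B) (M₂ := B) (R := Cᵐᵒᵖ) a (MulOpposite.op c) x

@[simp] lemma mul_apply (a a' : EndC ι) (x : B) : (a * a') x = a (a' x) := rfl

@[simp] lemma add_apply (a a' : EndC ι) (x : B) : (a + a') x = a x + a' x := rfl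

lemma sum_apply {κ : Type*} (s : Finset κ) (a : κ → EndC ι) (x : B) :
    (∑ k ∈ s, a k) x = ∑ k ∈ s, a k x :=
  letI := rmod ι
  LinearMap.sum_apply (M := B) (M₂ := B) (R := Cᵐᵒᵖ) s a x

variable (ι)

def mk (F : B →+ B) (hF : ∀ x c, F (x * ι c) = F x * ι c) : EndC ι :=
  @LinearMap.mk _ _ _ _ _ _ _ _ _ (rmod ι) (rmod ι) F.toAddHom fun c x => hF x c.unop

@[simp] lemma mk_apply (F : B →+ B) (hF) (x : B) : mk ι F hF x = F x := rfl

end EndC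

@[simp] lemma lam_apply {C B : Type*} [Ring C] [Ring B] (ι : C →+* B) (b x : B) :
    lam ι b x = b * x := rfl

section Tower

variable {C B : Type*} [Ring C] [Ring B] (ι : C →+* B)

local notation "κ" => RingHom.comp (lam ι) ι

def tensLam : Tens ι ι →+ Tens ι κ :=
  lift ι ι (mkBilin (fun b b' => tmul ι κ b (lam ι b'))
      (fun _ _ _ => tmul_add_left ..)
      (fun _ _ _ => by rw [map_add, tmul_add_right]))
    (fun l c r => by
      simp only [mkBilin_apply, map_mul]
      exact tmul_rel ι κ l c (lam ι r))

@[simp] lemma tensLam_tmul (l r : B) : tensLam ι (tmul ι ι l r) = tmul ι κ l (lam ι r) := rfl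

def tensEval : B →+ Tens ι κ →+ Tens ι ι :=
  AddMonoidHom.mk'
    (fun t => lift ι κ (mkBilin (fun b a => tmul ι ι b (a t))
      (fun _ _ _ => tmul_add_left ..)
      (fun _ _ _ => by rw [EndC.add_apply, tmul_add_right]))
      (fun l c a => tmul_rel ι ι l c (a t)))
    (fun t t' => by
      ext z
      refine eq_of_forall_tmul ι κ (fun l a => ?_) z
      show tmul ι ι l (a (t + t')) = tmul ι ι l (a t) + tmul ι ι l (a t')
      rw [map_add, tmul_add_right])

@[simp] lemma tensEval_tmul (t l : B) (a : EndC ι) :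
    tensEval ι t (tmul ι κ l a) = tmul ι ι l (a t) := rfl

lemma tensLam_lact (b : B) (z : Tens ι ι) :
    tensLam ι (lact ι ι b z) = lact ι κ b (tensLam ι z) :=
  eq_of_forall_tmul ι ι (φ := (tensLam ι).comp (lact ι ι b))
    (ψ := (lact ι κ b).comp (tensLam ι)) (fun _ _ => rfl) z

lemma tensLam_ract (c : C) (z : Tens ι ι) :
    tensLam ι (ract ι ι (ι c) z) = ract ι κ (κ c) (tensLam ι z) :=
  eq_of_forall_tmul ι ι (φ := (tensLam ι).comp (ract ι ι (ι c)))
    (ψ := (ract ι κ (κ c)).comp (tensLam ι)) (fun _ _ => by simp) z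

lemma tensEval_lact (t b : B) (z : Tens ι κ) :
    tensEval ι t (lact ι κ b z) = lact ι ι b (tensEval ι t z) :=
  eq_of_forall_tmul ι κ (φ := (tensEval ι t).comp (lact ι κ b))
    (ψ := (lact ι ι b).comp (tensEval ι t)) (fun _ _ => rfl) z

lemma tensEval_ract (t : B) (a : EndC ι) (z : Tens ι κ) :
    tensEval ι t (ract ι κ a z) = tensEval ι (a t) z :=
  eq_of_forall_tmul ι κ (φ := (tensEval ι t).comp (ract ι κ a))
    (ψ := tensEval ι (a t)) (fun _ _ => rfl) z

lemma tensEval_mul_ι (t : B) (c : C) (z : Tens ι κ) :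
    tensEval ι (t * ι c) z = ract ι ι (ι c) (tensEval ι t z) :=
  eq_of_forall_tmul ι κ (φ := tensEval ι (t * ι c))
    (ψ := (ract ι ι (ι c)).comp (tensEval ι t)) (fun _ _ => by simp [EndC.map_mul_ι]) z

lemma tensEval_one_tensLam (z : Tens ι ι) : tensEval ι 1 (tensLam ι z) = z :=
  eq_of_forall_tmul ι ι (φ := (tensEval ι 1).comp (tensLam ι)) (ψ := .id _)
    (fun _ _ => by simp) z

end Tower

section DualBasis

variable {C B : Type*} [Ring C] [Ring B] (ι : C →+* B) {N : ℕ} (x : Fin N → B)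
  {φ : Fin N → (B →+ C)} (hφ : ∀ k b c, φ k (b * ι c) = φ k b * c)

local notation "κ" => RingHom.comp (lam ι) ι

def dualEnd (k : Fin N) : EndC ι :=
  EndC.mk ι ((ι : C →+ B).comp (φ k)) fun t c => by simp [hφ]

@[simp] lemma dualEnd_apply (k : Fin N) (t : B) : dualEnd ι hφ k t = ι (φ k t) := rfl

lemma sum_lam_mul_dualEnd (hx : ∀ b, b = ∑ k, x k * ι (φ k b)) (a : EndC ι) :
    ∑ k, lam ι (a (x k)) * dualEnd ι hφ k = a := by
  ext t
  simp only [EndC.sum_apply, EndC.mul_apply, lam_apply, dualEnd_apply, ← EndC.map_mul_ι,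
    ← map_sum, ← hx]

def tensOfHom : (B →+ Tens ι ι) →+ Tens ι κ :=
  AddMonoidHom.mk' (fun F => ∑ k, ract ι κ (dualEnd ι hφ k) (tensLam ι (F (x k))))
    fun F G => by simp only [AddMonoidHom.add_apply, map_add, Finset.sum_add_distrib]

lemma tensOfHom_apply (F : B →+ Tens ι ι) :
    tensOfHom ι x hφ F = ∑ k, ract ι κ (dualEnd ι hφ k) (tensLam ι (F (x k))) := rfl

lemma tensOfHom_tensEval (hx : ∀ b, b = ∑ k, x k * ι (φ k b)) (z : Tens ι κ) :
    tensOfHom ι x hφ ((tensEval ι).flip z) = z := by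
  refine eq_of_forall_tmul ι κ (φ := (tensOfHom ι x hφ).comp (tensEval ι).flip) (ψ := .id _)
    (fun l a => ?_) z
  calc tensOfHom ι x hφ ((tensEval ι).flip (tmul ι κ l a))
      = tmul ι κ l (∑ k, lam ι (a (x k)) * dualEnd ι hφ k) := by
        simp only [tensOfHom_apply, AddMonoidHom.flip_apply, tensEval_tmul, tensLam_tmul,
          ract_tmul, tmul_sum]
    _ = tmul ι κ l a := by rw [sum_lam_mul_dualEnd ι x hφ hx]

lemma tensOfHom_lact (b : B) (F : B →+ Tens ι ι) :
    tensOfHom ι x hφ ((lact ι ι b).comp F) = lact ι κ b (tensOfHom ι x hφ F) := by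
  simp only [tensOfHom_apply, AddMonoidHom.comp_apply, tensLam_lact, ract_lact, map_sum]

lemma tensOfHom_comp (hx : ∀ b, b = ∑ k, x k * ι (φ k b)) (F : B →+ Tens ι ι)
    (hF : ∀ t c, F (t * ι c) = ract ι ι (ι c) (F t)) (a : EndC ι) :
    tensOfHom ι x hφ (F.comp (a : B →+ B)) = ract ι κ a (tensOfHom ι x hφ F) := by
  have hexpand : ∀ t, F (a t) = ∑ k', ract ι ι (ι (φ k' (a t))) (F (x k')) := fun t => by
    conv_lhs => rw [hx (a t)]
    simp only [map_sum, hF]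
  have hcoeff : ∀ k', ∑ k, κ (φ k' (a (x k))) * dualEnd ι hφ k = dualEnd ι hφ k' * a :=
    fun k' => sum_lam_mul_dualEnd ι x hφ hx (dualEnd ι hφ k' * a)
  calc tensOfHom ι x hφ (F.comp (a : B →+ B))
      = ∑ k, ∑ k', ract ι κ (κ (φ k' (a (x k))) * dualEnd ι hφ k) (tensLam ι (F (x k'))) := by
        simp only [tensOfHom_apply, AddMonoidHom.coe_comp, Function.comp_apply,
          AddMonoidHom.coe_coe, hexpand, map_sum, tensLam_ract, ract_ract]
    _ = ∑ k', ract ι κ (dualEnd ι hφ k' * a) (tensLam ι (F (x k'))) := by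
        rw [Finset.sum_comm]
        simp only [← ract_sum, hcoeff]
    _ = ract ι κ a (tensOfHom ι x hφ F) := by
        simp only [tensOfHom_apply, map_sum, ract_ract]

end DualBasis

def RightDepthTwo {C B : Type*} [Ring C] [Ring B] (ι : C →+* B) (m : ℕ) : Prop :=
  ∃ (i : Tens ι ι →+ (Fin m → B)) (p : (Fin m → B) →+ Tens ι ι),
    (∀ (b : B) x, i (lact ι ι b x) = fun k => b * i x k) ∧
    (∀ (c : C) x, i (ract ι ι (ι c) x) = fun k => i x k * ι c) ∧
    (∀ (b : B) v, p (fun k => b * v k) = lact ι ι b (p v)) ∧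
    (∀ (c : C) v, p (fun k => v k * ι c) = ract ι ι (ι c) (p v)) ∧
    ∀ x, p (i x) = x

section

variable {C B : Type*} [Ring C] [Ring B] (ι : C →+* B) {m N : ℕ} {x : Fin N → B}
  {φ : Fin N → (B →+ C)}

local notation "κ" => RingHom.comp (lam ι) ι

lemma leftRelHSep_of_rightDepthTwo (hφ : ∀ k b c, φ k (b * ι c) = φ k b * c)
    (hx : ∀ b, b = ∑ k, x k * ι (φ k b)) (h : RightDepthTwo ι m) :
    LeftRelHSep ι (lam ι) m := by
  obtain ⟨i, p, hi_lact, hi_ract, hp_lact, hp_ract, hpi⟩ := h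
  let i' : Tens ι κ →+ (Fin m → EndC ι) :=
    AddMonoidHom.mk' (fun z k => EndC.mk ι
        ((Pi.evalAddMonoidHom _ k).comp (i.comp ((tensEval ι).flip z)))
        fun t c => by simp [tensEval_mul_ι, hi_ract])
      fun z z' => by ext; simp
  let p' : (Fin m → EndC ι) →+ Tens ι κ :=
    AddMonoidHom.mk'
      (fun v => tensOfHom ι x hφ (p.comp (AddMonoidHom.pi fun s => (v s : B →+ B))))
      fun v w => by rw [← map_add]; congr 1; ext; exact map_add p _ _
  refine ⟨i', p', ?_, ?_, ?_, ?_, ?_⟩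
  · intro b z
    ext k t
    simp [i', tensEval_lact, hi_lact]
  · intro a z
    ext k t
    simp [i', tensEval_ract]
  · intro b v
    show tensOfHom ι x hφ _ = lact ι κ b (tensOfHom ι x hφ _)
    rw [← tensOfHom_lact]
    congr 1
    ext t
    exact hp_lact b _
  · intro a v
    have hF : ∀ t c, p (fun s => v s (t * ι c)) = ract ι ι (ι c) (p fun s => v s t) :=
      fun t c => by simpa only [EndC.map_mul_ι] using hp_ract c _
    show tensOfHom ι x hφ _ = ract ι κ a (tensOfHom ι x hφ _)
    rw [← tensOfHom_comp ι x hφ hx _ hF]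
    rfl
  · intro z
    have hpi' : p.comp (AddMonoidHom.pi fun s => (i' z s : B →+ B)) = (tensEval ι).flip z := by
      ext t
      exact hpi _
    exact (congrArg _ hpi').trans (tensOfHom_tensEval ι x hφ hx z)

end

section

variable {C B : Type*} [Ring C] [Ring B] (ι : C →+* B) {n : ℕ}

local notation "κ" => RingHom.comp (lam ι) ι

lemma tensEval_one_eq_sum (p : (Fin n → EndC ι) →+ Tens ι κ)
    (hp : ∀ (a : EndC ι) v, p (fun k => v k * a) = ract ι κ a (p v)) (v : Fin n → EndC ι) :
    tensEval ι 1 (p v) = ∑ k, tensEval ι (v k 1) (p (Pi.single k 1)) := by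
  have hv : v = ∑ k, fun k' => (Pi.single k 1 : Fin n → EndC ι) k' * v k := by
    ext1 k'
    simp [Finset.sum_apply, Pi.single_apply]
  conv_lhs => rw [hv]
  simp only [map_sum, hp, tensEval_ract]

lemma tensEval_one_lam_apply_one (p : (Fin n → EndC ι) →+ Tens ι κ)
    (hp : ∀ (a : EndC ι) v, p (fun k => v k * a) = ract ι κ a (p v)) (v : Fin n → EndC ι) :
    tensEval ι 1 (p fun k => lam ι (v k 1)) = tensEval ι 1 (p v) := by
  simp only [tensEval_one_eq_sum ι p hp, lam_apply, mul_one]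

lemma rightDepthTwo_of_leftRelHSep (h : LeftRelHSep ι (lam ι) n) : RightDepthTwo ι n := by
  obtain ⟨i, p, hi_lact, hi_ract, hp_lact, hp_ract, hpi⟩ := h
  refine ⟨AddMonoidHom.mk' (fun z k => i (tensLam ι z) k 1) fun z z' => by ext; simp,
    (tensEval ι 1).comp (p.comp ((lam ι).toAddMonoidHom.compLeft _)), ?_, ?_, ?_, ?_, ?_⟩
  · intro b z
    ext k
    simp [tensLam_lact, hi_lact]
  · intro c z
    ext k
    simp [tensLam_ract, hi_ract, ← EndC.map_mul_ι]
  · intro b v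
    show tensEval ι 1 (p fun k => lam ι (b * v k)) =
      lact ι ι b (tensEval ι 1 (p fun k => lam ι (v k)))
    simp only [map_mul, hp_lact, tensEval_lact]
  · intro c v
    show tensEval ι 1 (p fun k => lam ι (v k * ι c)) =
      ract ι ι (ι c) (tensEval ι 1 (p fun k => lam ι (v k)))
    simp only [map_mul, hp_ract, tensEval_ract, ← tensEval_mul_ι, lam_apply, mul_one, one_mul]
  · intro z
    show tensEval ι 1 (p fun k => lam ι (i (tensLam ι z) k 1)) = z
    rw [tensEval_one_lam_apply_one ι p hp_ract, hpi, tensEval_one_tensLam]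

end

theorem rightDepthTwo_iff_leftRelHSep_general
    {C B : Type*} [Ring C] [Ring B] (ι : C →+* B)
    -- `B_C` is finitely generated projective (dual bases)
    (hfgp : ∃ (N : ℕ) (x : Fin N → B) (φ : Fin N → (B →+ C)),
      (∀ (k : Fin N) (b : B) (c : C), φ k (b * ι c) = φ k b * c) ∧
      ∀ b : B, b = ∑ k, x k * ι (φ k b)) :
    -- right depth 2: `B ⊗_C B ⊕ * ≅ B^m` as `B`-`C`-bimodules
    (∃ (m : ℕ) (i : Tens ι ι →+ (Fin m → B)) (p : (Fin m → B) →+ Tens ι ι),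
      (∀ (b : B) x, i (lact ι ι b x) = fun k => b * i x k) ∧
      (∀ (c : C) x, i (ract ι ι (ι c) x) = fun k => i x k * ι c) ∧
      (∀ (b : B) v, p (fun k => b * v k) = lact ι ι b (p v)) ∧
      (∀ (c : C) v, p (fun k => v k * ι c) = ract ι ι (ι c) (p v)) ∧
      ∀ x, p (i x) = x) ↔
    (∃ n, LeftRelHSep ι (lam ι) n) := by
  obtain ⟨N, x, φ, hφ, hx⟩ := hfgp
  exact exists_congr fun m =>
    ⟨leftRelHSep_of_rightDepthTwo ι hφ hx, rightDepthTwo_of_leftRelHSep ι⟩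

/-- for a ring extension `B ⊇ C` with `B_C` a progenerator and
`A = End(B_C)` (with `B` embedded by the left regular representation), `B ⊇ C` is
right normal (right depth 2) iff the tower `A ⊇ B ⊇ C` is left relative H-separable. -/
theorem rightDepthTwo_iff_leftRelHSep
    {C B : Type*} [Ring C] [Ring B] (ι : C →+* B) (hι : Function.Injective ι)
    -- `B_C` is finitely generated projective (dual bases)
    (hfgp : ∃ (N : ℕ) (x : Fin N → B) (φ : Fin N → (B →+ C)),
      (∀ (k : Fin N) (b : B) (c : C), φ k (b * ι c) = φ k b * c) ∧
      ∀ b : B, b = ∑ k, x k * ι (φ k b))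
    -- `B_C` is a generator (the trace ideal contains `1`)
    (hgen : ∃ (N : ℕ) (ψ : Fin N → (B →+ C)) (y : Fin N → B),
      (∀ (k : Fin N) (b : B) (c : C), ψ k (b * ι c) = ψ k b * c) ∧
      ∑ k, ψ k (y k) = 1) :
    -- right depth 2: `B ⊗_C B ⊕ * ≅ B^m` as `B`-`C`-bimodules
    (∃ (m : ℕ) (i : Tens ι ι →+ (Fin m → B)) (p : (Fin m → B) →+ Tens ι ι),
      (∀ (b : B) x, i (lact ι ι b x) = fun k => b * i x k) ∧
      (∀ (c : C) x, i (ract ι ι (ι c) x) = fun k => i x k * ι c) ∧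
      (∀ (b : B) v, p (fun k => b * v k) = lact ι ι b (p v)) ∧
      (∀ (c : C) v, p (fun k => v k * ι c) = ract ι ι (ι c) (p v)) ∧
      ∀ x, p (i x) = x) ↔
    (∃ n, LeftRelHSep ι (lam ι) n) :=
  rightDepthTwo_iff_leftRelHSep_general ι hfgp

end
end
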